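/- Distribution of MIPairs depends only on the intersection size: let P ⊆ [n] × [n] be any set of c pairs whose first coordinates are pairwise distinct and whose second coordinates are pairwise distinct, and let π_1, π_2 be independent uniformly random permutations of [n]. Then the random set {(π_1(i), π_2(j)) : (i,j) ∈ P} has a distribution that depends only on c, i.e., for any two such sets P, P' of equal size c, the resulting distributions are identical. -/

import Mathlib

/-!
A set of pairs with pairwise distinct first and pairwise distinct second coordinates is the graph
of a partial bijection. Two such graphs of equal size are carried onto each other by a pair of
permutations `(σ₁, σ₂)` acting coordinatewise, so the random set built from `P'` is the one built
from `P` with `(π₁, π₂)` replaced by `(π₁ σ₁, π₂ σ₂)`; right multiplication preserves the uniform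
distribution on pairs of permutations.
-/

open Equiv

theorem PMF.map_equiv_uniformOfFintype {α β : Type*} [Fintype α] [Nonempty α] [Fintype β]
    [Nonempty β] (e : α ≃ β) :
    (PMF.uniformOfFintype α).map e = PMF.uniformOfFintype β := by
  ext b
  rw [PMF.map_apply, tsum_eq_single (e.symm b) fun a ha => if_neg fun h => ha (by simp [h])]
  simp [PMF.uniformOfFintype_apply, Fintype.card_congr e]

theorem Finset.exists_perm_prodMap_image_eq {α β : Type*} [DecidableEq α] [DecidableEq β]
    {P P' : Finset (α × β)}
    (hP1 : Set.InjOn (Prod.fst : α × β → α) P) (hP2 : Set.InjOn (Prod.snd : α × β → β) P)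
    (hP'1 : Set.InjOn (Prod.fst : α × β → α) P') (hP'2 : Set.InjOn (Prod.snd : α × β → β) P')
    (hcard : P.card = P'.card) :
    ∃ (σ₁ : Perm α) (σ₂ : Perm β), P.image (Prod.map σ₁ σ₂) = P' := by
  let e : P ≃ P' := P.equivOfCardEq hcard
  obtain ⟨σ₁, hσ₁⟩ := Perm.exists_extending_pair (fun p : P => p.1.1) (fun p => (e p).1.1)
    (fun p q h => Subtype.ext (hP1 p.2 q.2 h))
    (fun p q h => e.injective (Subtype.ext (hP'1 (e p).2 (e q).2 h)))
  obtain ⟨σ₂, hσ₂⟩ := Perm.exists_extending_pair (fun p : P => p.1.2) (fun p => (e p).1.2)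
    (fun p q h => Subtype.ext (hP2 p.2 q.2 h))
    (fun p q h => e.injective (Subtype.ext (hP'2 (e p).2 (e q).2 h)))
  have hσ : ∀ p : P, Prod.map σ₁ σ₂ p.1 = (e p).1 := fun p => Prod.ext (hσ₁ p) (hσ₂ p)
  refine ⟨σ₁, σ₂, Finset.ext fun x => ⟨fun hx => ?_, fun hx => ?_⟩⟩
  · obtain ⟨p, hp, rfl⟩ := Finset.mem_image.1 hx
    exact (hσ ⟨p, hp⟩).symm ▸ (e ⟨p, hp⟩).2
  · refine Finset.mem_image.2 ⟨(e.symm ⟨x, hx⟩).1, (e.symm ⟨x, hx⟩).2, ?_⟩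
    rw [hσ, e.apply_symm_apply]

/-- Distribution of `MIPairs` depends only on the intersection size: for two sets `P`, `P'` of
`c` index pairs, each with pairwise distinct first coordinates and pairwise distinct second
coordinates, applying independent uniform permutations `π₁, π₂` coordinatewise yields
identically distributed random sets. -/
theorem mipairs_distribution_depends_only_on_size (n c : ℕ)
    (P P' : Finset (Fin n × Fin n))
    (hP1 : ∀ p ∈ P, ∀ q ∈ P, p.1 = q.1 → p = q)
    (hP2 : ∀ p ∈ P, ∀ q ∈ P, p.2 = q.2 → p = q)
    (hP'1 : ∀ p ∈ P', ∀ q ∈ P', p.1 = q.1 → p = q)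
    (hP'2 : ∀ p ∈ P', ∀ q ∈ P', p.2 = q.2 → p = q)
    (hc : P.card = c) (hc' : P'.card = c) :
    PMF.map
        (fun π : Equiv.Perm (Fin n) × Equiv.Perm (Fin n) =>
          P.image (fun p => (π.1 p.1, π.2 p.2)))
        (PMF.uniformOfFintype (Equiv.Perm (Fin n) × Equiv.Perm (Fin n))) =
      PMF.map
        (fun π : Equiv.Perm (Fin n) × Equiv.Perm (Fin n) =>
          P'.image (fun p => (π.1 p.1, π.2 p.2)))
        (PMF.uniformOfFintype (Equiv.Perm (Fin n) × Equiv.Perm (Fin n))) := by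
  obtain ⟨σ₁, σ₂, rfl⟩ :=
    Finset.exists_perm_prodMap_image_eq hP1 hP2 hP'1 hP'2 (hc.trans hc'.symm)
  have hshift : (fun π : Perm (Fin n) × Perm (Fin n) =>
        (P.image (Prod.map σ₁ σ₂)).image fun p => (π.1 p.1, π.2 p.2)) =
      (fun π : Perm (Fin n) × Perm (Fin n) => P.image fun p => (π.1 p.1, π.2 p.2)) ∘
        prodCongr (Equiv.mulRight σ₁) (Equiv.mulRight σ₂) := by
    funext π
    simp only [Finset.image_image, Function.comp_def]
    rfl
  rw [hshift, ← PMF.map_comp, PMF.map_equiv_uniformOfFintype]
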